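/- For all w in the closed l∞-ball B̄_β, the mini-batch zeroth-order gradient estimator satisfies E[‖∇f_α(w) − (1/(Mα)) Σ_{i=1}^M dF(w, u^i, ξ^i)‖₂²] ≤ d·Q/M, where Q := E[L₀(ξ)²]. -/

import Mathlib

open MeasureTheory Filter
open scoped Classical BigOperators

noncomputable section

/-- The closed `l∞`-ball of radius `r` centered at `0` in `ℝ^d`. -/
def Binf (d : ℕ) (r : ℝ) : Set (EuclideanSpace ℝ (Fin d)) := {z | ∀ i, |z i| ≤ r}

/-- The uniform probability distribution on the closed `l∞`-ball of radius `r` in `ℝ^d`. -/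
def unifMeas (d : ℕ) (r : ℝ) : Measure (EuclideanSpace ℝ (Fin d)) :=
  (volume (Binf d r))⁻¹ • volume.restrict (Binf d r)

/-- The point `w + u` with its `i`-th coordinate replaced by `w i + s`. -/
def shiftPt {d : ℕ} (s : ℝ) (w u : EuclideanSpace ℝ (Fin d)) (i : Fin d) :
    EuclideanSpace ℝ (Fin d) :=
  w + u + (s - u i) • EuclideanSpace.single i (1 : ℝ)

/-- The finite difference `df_i(w, u_{∖i})` of a function `f : ℝ^d → ℝ`. -/
def dfFD {d : ℕ} (α : ℝ) (f : EuclideanSpace ℝ (Fin d) → ℝ)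
    (i : Fin d) (w u : EuclideanSpace ℝ (Fin d)) : ℝ :=
  f (shiftPt (α / 2) w u i) - f (shiftPt (-(α / 2)) w u i)

/-- The finite-difference vector `dF(w,u,ξ)` whose `i`-th component is
`F(…, w_i + α/2, …, ξ) − F(…, w_i − α/2, …, ξ)`. -/
def dFvec {d p : ℕ} (α : ℝ)
    (F : EuclideanSpace ℝ (Fin d) → EuclideanSpace ℝ (Fin p) → ℝ)
    (w u : EuclideanSpace ℝ (Fin d)) (ξ : EuclideanSpace ℝ (Fin p)) :
    EuclideanSpace ℝ (Fin d) :=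
  ∑ i : Fin d,
    (F (shiftPt (α / 2) w u i) ξ - F (shiftPt (-(α / 2)) w u i) ξ) • EuclideanSpace.single i (1 : ℝ)

/-- `f(w) := E[F(w,ξ)]`. -/
def fbar {d p : ℕ} (μξ : Measure (EuclideanSpace ℝ (Fin p)))
    (F : EuclideanSpace ℝ (Fin d) → EuclideanSpace ℝ (Fin p) → ℝ)
    (w : EuclideanSpace ℝ (Fin d)) : ℝ := ∫ ξ, F w ξ ∂μξ

/-- The randomized smoothing `f_α(w) := E[f(w+u)]`, `u` uniform on `B̄_{α/2}`. -/
def smoothed {d : ℕ} (α : ℝ) (f : EuclideanSpace ℝ (Fin d) → ℝ)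
    (w : EuclideanSpace ℝ (Fin d)) : ℝ := ∫ u, f (w + u) ∂(unifMeas d (α / 2))

/-! Each coordinate of `dF(w, u, ξ)` is the difference of `F(·, ξ)` at two points of `B̄_κ` at
distance `α`, hence at most `α L₀(ξ)` in absolute value, so `E‖dF‖² ≤ d α² Q`. The estimator is
`α⁻¹` times the sample mean of `M` independent copies of `dF`; in every coordinate the variance
of a mean of `M` independent samples is `1/M` times that of one sample, and a variance is at most
the second moment. -/

open ProbabilityTheory

section SampleMean

variable {Ω ι S : Type*} [MeasurableSpace Ω] [MeasurableSpace S] {P : Measure Ω}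
  [IsProbabilityMeasure P] [Fintype ι] [Nonempty ι]

lemma integral_sq_sub_sampleMean_eq {Y : ι → Ω → ℝ} {c : ℝ}
    (hY : ∀ i, MemLp (Y i) 2 P) (hindep : Pairwise fun i j => Y i ⟂ᵢ[P] Y j)
    (hmean : ∀ i, P[Y i] = c) :
    ∫ ω, (c - (Fintype.card ι : ℝ)⁻¹ * ∑ i, Y i ω) ^ 2 ∂P
      = (∑ i, Var[Y i; P]) / (Fintype.card ι : ℝ) ^ 2 := by
  set N : ℝ := (Fintype.card ι : ℝ)
  have hN : N ≠ 0 := Nat.cast_ne_zero.2 Fintype.card_ne_zero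
  have hsum_mean : P[∑ i, Y i] = N * c := by
    simp_rw [Finset.sum_apply]
    rw [integral_finsetSum _ fun i _ => (hY i).integrable one_le_two]
    simp [hmean, N]
  have hvar : Var[∑ i, Y i; P] = ∑ i, Var[Y i; P] :=
    IndepFun.variance_sum (fun i _ => hY i) fun i _ j _ hij => hindep hij
  rw [← hvar, variance_eq_integral (memLp_finsetSum' _ fun i _ => hY i).aemeasurable,
    hsum_mean, ← integral_div]
  congr 1 with ω
  rw [Finset.sum_apply]
  field_simp
  ring

variable {ν : Measure S} {Y : ι → Ω → S}

lemma integral_sq_sub_sampleMean_le (hY : ∀ i, Measurable (Y i))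
    (hindep : Pairwise fun i j => Y i ⟂ᵢ[P] Y j) (hlaw : ∀ i, P.map (Y i) = ν) {h : S → ℝ}
    (hh : Measurable h) (hhL2 : MemLp h 2 ν) :
    ∫ ω, ((∫ s, h s ∂ν) - (Fintype.card ι : ℝ)⁻¹ * ∑ i, h (Y i ω)) ^ 2 ∂P
      ≤ (∫ s, h s ^ 2 ∂ν) / Fintype.card ι := by
  set N : ℝ := (Fintype.card ι : ℝ)
  have hN : 0 < N := Nat.cast_pos.2 Fintype.card_pos
  have : IsProbabilityMeasure ν :=
    hlaw (Classical.arbitrary ι) ▸ Measure.isProbabilityMeasure_map (hY _).aemeasurable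
  have hsample_L2 (i : ι) : MemLp (fun ω => h (Y i ω)) 2 P :=
    (memLp_map_measure_iff hh.aestronglyMeasurable (hY i).aemeasurable).1 (hlaw i ▸ hhL2)
  have hsample_mean (i : ι) : ∫ ω, h (Y i ω) ∂P = ∫ s, h s ∂ν := by
    rw [← hlaw i, integral_map (hY i).aemeasurable (hlaw i ▸ hh.aestronglyMeasurable)]
  have hsample_var (i : ι) : Var[fun ω => h (Y i ω); P] = Var[h; ν] := by
    rw [← hlaw i, variance_map (hlaw i ▸ hh.aemeasurable) (hY i).aemeasurable]
    rfl
  rw [integral_sq_sub_sampleMean_eq hsample_L2 (fun i j hij => (hindep hij).comp hh hh)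
    hsample_mean]
  simp_rw [hsample_var, Finset.sum_const, Finset.card_univ, nsmul_eq_mul]
  rw [sq, ← div_div, mul_div_cancel_left₀ _ hN.ne']
  exact div_le_div_of_nonneg_right (variance_le_expectation_sq hh.aestronglyMeasurable) hN.le

lemma integral_norm_sq_sub_sampleMean_le {n : Type*} [Fintype n] (hY : ∀ i, Measurable (Y i))
    (hindep : Pairwise fun i j => Y i ⟂ᵢ[P] Y j) (hlaw : ∀ i, P.map (Y i) = ν)
    {g : S → EuclideanSpace ℝ n} (hg : Measurable g) (hgL2 : MemLp g 2 ν) :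
    ∫ ω, ‖(∫ s, g s ∂ν) - (Fintype.card ι : ℝ)⁻¹ • ∑ i, g (Y i ω)‖ ^ 2 ∂P
      ≤ (∫ s, ‖g s‖ ^ 2 ∂ν) / Fintype.card ι := by
  set N : ℝ := (Fintype.card ι : ℝ)
  have : IsProbabilityMeasure ν :=
    hlaw (Classical.arbitrary ι) ▸ Measure.isProbabilityMeasure_map (hY _).aemeasurable
  have hcoord_meas (k : n) : Measurable fun s => g s k :=
    (EuclideanSpace.proj k).continuous.measurable.comp hg
  have hcoord_L2 (k : n) : MemLp (fun s => g s k) 2 ν := memLp_piLp_iff.1 hgL2 k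
  have hcoord_sq_int (k : n) :
      Integrable (fun ω => ((∫ s, g s ∂ν) k - N⁻¹ * ∑ i, g (Y i ω) k) ^ 2) P := by
    have hsample_L2 (i : ι) : MemLp (fun ω => g (Y i ω) k) 2 P :=
      (memLp_map_measure_iff (hcoord_meas k).aestronglyMeasurable (hY i).aemeasurable).1
        (hlaw i ▸ hcoord_L2 k)
    have hsum : MemLp (fun ω => ∑ i, g (Y i ω) k) 2 P :=
      memLp_finsetSum _ fun i _ => hsample_L2 i
    exact ((memLp_const ((∫ s, g s ∂ν) k)).sub (hsum.const_mul N⁻¹)).integrable_sq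
  calc ∫ ω, ‖(∫ s, g s ∂ν) - N⁻¹ • ∑ i, g (Y i ω)‖ ^ 2 ∂P
      = ∑ k, ∫ ω, ((∫ s, g s ∂ν) k - N⁻¹ * ∑ i, g (Y i ω) k) ^ 2 ∂P := by
        rw [← integral_finsetSum _ fun k _ => hcoord_sq_int k]
        congr 1 with ω
        rw [EuclideanSpace.real_norm_sq_eq]
        simp only [PiLp.sub_apply, PiLp.smul_apply, WithLp.ofLp_sum, Finset.sum_apply, smul_eq_mul]
    _ ≤ ∑ k, (∫ s, g s k ^ 2 ∂ν) / N := Finset.sum_le_sum fun k _ => by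
        rw [eval_integral_piLp fun k => (hcoord_L2 k).integrable one_le_two]
        exact integral_sq_sub_sampleMean_le hY hindep hlaw (hcoord_meas k) (hcoord_L2 k)
    _ = (∫ s, ‖g s‖ ^ 2 ∂ν) / N := by
        simp_rw [← Finset.sum_div, EuclideanSpace.real_norm_sq_eq]
        rw [integral_finsetSum _ fun k _ => (hcoord_L2 k).integrable_sq]

end SampleMean

lemma measurableSet_Binf (d : ℕ) (r : ℝ) : MeasurableSet (Binf d r) := by
  simp only [Binf, Set.ofPred_forall]
  exact MeasurableSet.iInter fun i => measurableSet_le (by fun_prop) measurable_const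

lemma ae_mem_Binf_unifMeas (d : ℕ) (r : ℝ) : ∀ᵐ u ∂unifMeas d r, u ∈ Binf d r :=
  Measure.ae_smul_measure (ae_restrict_mem (measurableSet_Binf d r)) _

lemma shiftPt_apply {d : ℕ} (s : ℝ) (w u : EuclideanSpace ℝ (Fin d)) (i j : Fin d) :
    shiftPt s w u i j = if j = i then w i + s else w j + u j := by
  simp only [shiftPt, PiLp.add_apply, PiLp.smul_apply, PiLp.single_apply, smul_eq_mul]
  split_ifs with h
  · subst h; ring
  · ring

lemma shiftPt_mem_Binf {d : ℕ} {a b c s : ℝ} {w u : EuclideanSpace ℝ (Fin d)}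
    (hw : w ∈ Binf d b) (hu : u ∈ Binf d a) (hs : |s| ≤ a) (hc : b + a ≤ c) (i : Fin d) :
    shiftPt s w u i ∈ Binf d c := by
  intro j
  rw [shiftPt_apply]
  split_ifs
  · exact (abs_add_le _ _).trans ((add_le_add (hw i) hs).trans hc)
  · exact (abs_add_le _ _).trans ((add_le_add (hw j) (hu j)).trans hc)

lemma norm_shiftPt_sub_shiftPt {d : ℕ} {α : ℝ} (hα : 0 ≤ α) (w u : EuclideanSpace ℝ (Fin d))
    (i : Fin d) : ‖shiftPt (α / 2) w u i - shiftPt (-(α / 2)) w u i‖ = α := by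
  have : shiftPt (α / 2) w u i - shiftPt (-(α / 2)) w u i = α • EuclideanSpace.single i 1 := by
    simp only [shiftPt]
    module
  rw [this, norm_smul, PiLp.norm_single, norm_one, mul_one, Real.norm_of_nonneg hα]

lemma dFvec_apply {d p : ℕ} (α : ℝ) (F : EuclideanSpace ℝ (Fin d) → EuclideanSpace ℝ (Fin p) → ℝ)
    (w u : EuclideanSpace ℝ (Fin d)) (ξ : EuclideanSpace ℝ (Fin p)) (k : Fin d) :
    dFvec α F w u ξ k = F (shiftPt (α / 2) w u k) ξ - F (shiftPt (-(α / 2)) w u k) ξ := by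
  simp [dFvec, Pi.single_apply]

lemma norm_sq_dFvec_le {d p : ℕ} {α β κ L : ℝ} (hα : 0 ≤ α) (hκ : β + α / 2 ≤ κ)
    {F : EuclideanSpace ℝ (Fin d) → EuclideanSpace ℝ (Fin p) → ℝ} {ξ : EuclideanSpace ℝ (Fin p)}
    (hlip : ∀ w ∈ Binf d κ, ∀ w' ∈ Binf d κ, |F w ξ - F w' ξ| ≤ L * ‖w - w'‖)
    {w u : EuclideanSpace ℝ (Fin d)} (hw : w ∈ Binf d β) (hu : u ∈ Binf d (α / 2)) :
    ‖dFvec α F w u ξ‖ ^ 2 ≤ d * α ^ 2 * L ^ 2 := by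
  have hs : |α / 2| ≤ α / 2 := (abs_of_nonneg (by positivity)).le
  have hcoord (k : Fin d) : |dFvec α F w u ξ k| ≤ α * L := by
    have h := hlip _ (shiftPt_mem_Binf hw hu hs hκ k) _
      (shiftPt_mem_Binf hw hu (by rwa [abs_neg]) hκ k)
    rwa [norm_shiftPt_sub_shiftPt hα, mul_comm, ← dFvec_apply] at h
  calc ‖dFvec α F w u ξ‖ ^ 2 = ∑ k, |dFvec α F w u ξ k| ^ 2 := by
        simp [EuclideanSpace.real_norm_sq_eq]
    _ ≤ ∑ _k : Fin d, (α * L) ^ 2 :=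
        Finset.sum_le_sum fun k _ => pow_le_pow_left₀ (abs_nonneg _) (hcoord k) 2
    _ = d * α ^ 2 * L ^ 2 := by simp [mul_pow, mul_assoc]

lemma measurable_dFvec {d p : ℕ} (α : ℝ)
    {F : EuclideanSpace ℝ (Fin d) → EuclideanSpace ℝ (Fin p) → ℝ}
    (hF : Measurable (Function.uncurry F)) (w : EuclideanSpace ℝ (Fin d)) :
    Measurable fun q : EuclideanSpace ℝ (Fin d) × EuclideanSpace ℝ (Fin p) =>
      dFvec α F w q.1 q.2 := by
  have hshift (s : ℝ) (k : Fin d) : Measurable fun q : EuclideanSpace ℝ (Fin d) ×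
      EuclideanSpace ℝ (Fin p) => F (shiftPt s w q.1 k) q.2 :=
    hF.comp (Measurable.prodMk (by fun_prop) measurable_snd)
  unfold dFvec
  exact Finset.measurable_sum _ fun k _ => ((hshift _ k).sub (hshift _ k)).smul_const _

lemma ae_norm_sq_dFvec_le {d p : ℕ} {α β κ : ℝ} (hα : 0 ≤ α) (hκ : β + α / 2 ≤ κ)
    {μξ : Measure (EuclideanSpace ℝ (Fin p))} [SFinite μξ]
    {F : EuclideanSpace ℝ (Fin d) → EuclideanSpace ℝ (Fin p) → ℝ}
    {L0 : EuclideanSpace ℝ (Fin p) → ℝ}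
    (hlip : ∀ᵐ ξ ∂μξ, ∀ w ∈ Binf d κ, ∀ w' ∈ Binf d κ, |F w ξ - F w' ξ| ≤ L0 ξ * ‖w - w'‖)
    {w : EuclideanSpace ℝ (Fin d)} (hw : w ∈ Binf d β) :
    ∀ᵐ q ∂(unifMeas d (α / 2)).prod μξ, ‖dFvec α F w q.1 q.2‖ ^ 2 ≤ d * α ^ 2 * L0 q.2 ^ 2 := by
  filter_upwards [Measure.quasiMeasurePreserving_fst.ae (ae_mem_Binf_unifMeas d (α / 2)),
    Measure.quasiMeasurePreserving_snd.ae hlip] with q hu hξ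
  exact norm_sq_dFvec_le hα hκ hξ hw hu

lemma memLp_dFvec_and_integral_norm_sq_le {d p : ℕ} {α β κ : ℝ} (hα : 0 ≤ α)
    (hκ : β + α / 2 ≤ κ) {μξ : Measure (EuclideanSpace ℝ (Fin p))} [IsProbabilityMeasure μξ]
    [IsProbabilityMeasure (unifMeas d (α / 2))]
    {F : EuclideanSpace ℝ (Fin d) → EuclideanSpace ℝ (Fin p) → ℝ}
    (hF : Measurable (Function.uncurry F)) {L0 : EuclideanSpace ℝ (Fin p) → ℝ}
    (hL0sq : Integrable (fun ξ => L0 ξ ^ 2) μξ)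
    (hlip : ∀ᵐ ξ ∂μξ, ∀ w ∈ Binf d κ, ∀ w' ∈ Binf d κ, |F w ξ - F w' ξ| ≤ L0 ξ * ‖w - w'‖)
    {w : EuclideanSpace ℝ (Fin d)} (hw : w ∈ Binf d β) :
    MemLp (fun q => dFvec α F w q.1 q.2) 2 ((unifMeas d (α / 2)).prod μξ) ∧
      ∫ q, ‖dFvec α F w q.1 q.2‖ ^ 2 ∂(unifMeas d (α / 2)).prod μξ
        ≤ d * α ^ 2 * ∫ ξ, L0 ξ ^ 2 ∂μξ := by
  have hbound := ae_norm_sq_dFvec_le hα hκ hlip hw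
  have hbound_int : Integrable (fun q : EuclideanSpace ℝ (Fin d) × EuclideanSpace ℝ (Fin p) =>
      d * α ^ 2 * L0 q.2 ^ 2) ((unifMeas d (α / 2)).prod μξ) := (hL0sq.comp_snd _).const_mul _
  have hg := measurable_dFvec α hF w
  have hgsq_int : Integrable (fun q => ‖dFvec α F w q.1 q.2‖ ^ 2) ((unifMeas d (α / 2)).prod μξ) :=
    hbound_int.mono' (hg.norm.pow_const 2).aestronglyMeasurable
      (hbound.mono fun q hq => by rwa [Real.norm_of_nonneg (by positivity)])
  refine ⟨(memLp_two_iff_integrable_sq_norm hg.aestronglyMeasurable).2 hgsq_int, ?_⟩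
  refine (integral_mono_ae hgsq_int hbound_int hbound).trans_eq ?_
  rw [integral_const_mul, integral_fun_snd (fun ξ => L0 ξ ^ 2), probReal_univ, one_smul]

theorem zeroth_order_estimator_variance_general
    (d p : ℕ) (α β κ : ℝ) (hα : 0 < α) (hκ : β + α / 2 < κ)
    (μξ : Measure (EuclideanSpace ℝ (Fin p))) [IsProbabilityMeasure μξ]
    (F : EuclideanSpace ℝ (Fin d) → EuclideanSpace ℝ (Fin p) → ℝ)
    (hFmeas : Measurable (Function.uncurry F))
    (L0 : EuclideanSpace ℝ (Fin p) → ℝ)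
    (hL0sq : Integrable (fun ξ => (L0 ξ) ^ 2) μξ)
    (hlip : ∀ᵐ ξ ∂μξ, ∀ w ∈ Binf d κ, ∀ w' ∈ Binf d κ,
      |F w ξ - F w' ξ| ≤ L0 ξ * ‖w - w'‖)
    (Ω : Type) [MeasurableSpace Ω] (P : Measure Ω) [IsProbabilityMeasure P]
    (M : ℕ) (hM : 1 ≤ M)
    (U : Fin M → Ω → EuclideanSpace ℝ (Fin d))
    (X : Fin M → Ω → EuclideanSpace ℝ (Fin p))
    (hUmeas : ∀ i, Measurable (U i)) (hXmeas : ∀ i, Measurable (X i))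
    (hindep : ProbabilityTheory.iIndepFun
      (fun i ω => (U i ω, X i ω)) P)
    (hdist : ∀ i, P.map (fun ω => (U i ω, X i ω)) = (unifMeas d (α / 2)).prod μξ)
    :
    ∀ w ∈ Binf d β,
      (∫ ω, ‖(α⁻¹ • ∫ q : EuclideanSpace ℝ (Fin d) × EuclideanSpace ℝ (Fin p),
              dFvec α F w q.1 q.2 ∂((unifMeas d (α / 2)).prod μξ)) -
            ((M : ℝ) * α)⁻¹ • ∑ i : Fin M, dFvec α F w (U i ω) (X i ω)‖ ^ 2 ∂P)
        ≤ (d : ℝ) * (∫ ξ, (L0 ξ) ^ 2 ∂μξ) / (M : ℝ) := by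
  intro w hw
  set ν := (unifMeas d (α / 2)).prod μξ
  set g := fun q : EuclideanSpace ℝ (Fin d) × EuclideanSpace ℝ (Fin p) => dFvec α F w q.1 q.2
  have : Nonempty (Fin M) := ⟨⟨0, hM⟩⟩
  have hY (i : Fin M) : Measurable fun ω => (U i ω, X i ω) := (hUmeas i).prodMk (hXmeas i)
  have : IsProbabilityMeasure ν :=
    hdist ⟨0, hM⟩ ▸ Measure.isProbabilityMeasure_map (hY _).aemeasurable
  have : IsProbabilityMeasure (unifMeas d (α / 2)) := by
    simpa [ν] using Measure.isProbabilityMeasure_map (μ := ν) measurable_fst.aemeasurable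
  obtain ⟨hgL2, hgsq⟩ := memLp_dFvec_and_integral_norm_sq_le hα.le hκ.le hFmeas hL0sq hlip hw
  have key := integral_norm_sq_sub_sampleMean_le hY (fun i j hij => hindep.indepFun hij) hdist
    (measurable_dFvec α hFmeas w) hgL2
  rw [Fintype.card_fin] at key
  have hscale (m S : EuclideanSpace ℝ (Fin d)) :
      α⁻¹ • m - ((M : ℝ) * α)⁻¹ • S = α⁻¹ • (m - (M : ℝ)⁻¹ • S) := by
    module
  calc _ = α⁻¹ ^ 2 * ∫ ω, ‖(∫ q, g q ∂ν) - (M : ℝ)⁻¹ • ∑ i, g (U i ω, X i ω)‖ ^ 2 ∂P := by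
        rw [← integral_const_mul]
        congr 1 with ω
        rw [hscale, norm_smul, mul_pow, Real.norm_of_nonneg (by positivity)]
    _ ≤ α⁻¹ ^ 2 * ((∫ q, ‖g q‖ ^ 2 ∂ν) / M) := by gcongr
    _ ≤ α⁻¹ ^ 2 * (d * α ^ 2 * (∫ ξ, L0 ξ ^ 2 ∂μξ) / M) := by gcongr
    _ = d * (∫ ξ, L0 ξ ^ 2 ∂μξ) / M := by field_simp

/-- For all `w ∈ B̄_β`, the mini-batch zeroth-order gradient estimator built
from `M` i.i.d. samples `(u^i, ξ^i)` (each `u^i` uniform on `B̄_{α/2}` independent of `ξ^i ∼ ξ`)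
satisfies `E[‖∇f_α(w) − (1/(Mα)) Σᵢ dF(w,u^i,ξ^i)‖₂²] ≤ d·Q/M`, where `Q := E[L₀(ξ)²]`
and `∇f_α(w) = α⁻¹ E[dF(w,u,ξ)]`. -/
theorem zeroth_order_estimator_variance
    (d p : ℕ) (α β κ : ℝ) (hα : 0 < α) (hβ : 0 < β) (hκ : β + α / 2 < κ)
    (μξ : Measure (EuclideanSpace ℝ (Fin p))) [IsProbabilityMeasure μξ]
    (F : EuclideanSpace ℝ (Fin d) → EuclideanSpace ℝ (Fin p) → ℝ)
    (hFmeas : Measurable (Function.uncurry F))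
    (hFcont : ∀ ξ, ContinuousOn (fun w => F w ξ) (Binf d κ))
    (L0 : EuclideanSpace ℝ (Fin p) → ℝ) (hL0meas : Measurable L0)
    (hL0sq : Integrable (fun ξ => (L0 ξ) ^ 2) μξ)
    (hlip : ∀ᵐ ξ ∂μξ, ∀ w ∈ Binf d κ, ∀ w' ∈ Binf d κ,
      |F w ξ - F w' ξ| ≤ L0 ξ * ‖w - w'‖)
    (hFint : ∀ w ∈ Binf d κ, Integrable (fun ξ => F w ξ) μξ)
    (Ω : Type) [MeasurableSpace Ω] (P : Measure Ω) [IsProbabilityMeasure P]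
    (M : ℕ) (hM : 1 ≤ M)
    (U : Fin M → Ω → EuclideanSpace ℝ (Fin d))
    (X : Fin M → Ω → EuclideanSpace ℝ (Fin p))
    (hUmeas : ∀ i, Measurable (U i)) (hXmeas : ∀ i, Measurable (X i))
    (hindep : ProbabilityTheory.iIndepFun
      (fun i ω => (U i ω, X i ω)) P)
    (hdist : ∀ i, P.map (fun ω => (U i ω, X i ω)) = (unifMeas d (α / 2)).prod μξ)
    :
    ∀ w ∈ Binf d β,
      (∫ ω, ‖(α⁻¹ • ∫ q : EuclideanSpace ℝ (Fin d) × EuclideanSpace ℝ (Fin p),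
              dFvec α F w q.1 q.2 ∂((unifMeas d (α / 2)).prod μξ)) -
            ((M : ℝ) * α)⁻¹ • ∑ i : Fin M, dFvec α F w (U i ω) (X i ω)‖ ^ 2 ∂P)
        ≤ (d : ℝ) * (∫ ξ, (L0 ξ) ^ 2 ∂μξ) / (M : ℝ) :=
  zeroth_order_estimator_variance_general d p α β κ hα hκ μξ F hFmeas L0 hL0sq hlip Ω P M hM U X
    hUmeas hXmeas hindep hdist
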